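/- arXiv:2001.04321 — 3 statements merged into one kernel-verified Lean document; each statement's English description precedes it below -/
import Mathlib

section
/- Let M ∈ ℝ^{m×n}, H ∈ ℝ^{r×n}, and W ∈ ℝ^{m×r}, and fix a column index j with ‖H_{j,:}‖ > 0. Then the vector w* = max(0, (M H_{j,:}ᵀ − ∑_{l≠j} W_{:,l} H_{l,:} H_{j,:}ᵀ) / ‖H_{j,:}‖²) (entrywise maximum with 0) is the unique minimizer over w ≥ 0 (entrywise) of the function w ↦ ‖M − w H_{j,:} − ∑_{l≠j} W_{:,l} H_{l,:}‖_F². -/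
/-!
Row `i` of the residual only involves the entry `w i`, so the objective separates into `m`
independent one-dimensional least-squares problems `x ↦ ∑ t (a t - x * h t)²` over `x ≥ 0`.
Each is a quadratic `s x² - 2 c x + const` with leading coefficient `s = ‖h‖² > 0`, whose unique
minimizer on `[0, ∞)` is the projection `max 0 (c / s)` of its unconstrained minimizer.
-/

open Finset

theorem sum_lt_sum_of_ne {ι α M : Type*} [Fintype ι]
    [AddCommMonoid M] [PartialOrder M] [IsOrderedCancelAddMonoid M]
    (g : ι → α → M) {p w : ι → α} (hg : ∀ i, w i ≠ p i → g i (p i) < g i (w i))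
    (hne : w ≠ p) : ∑ i, g i (p i) < ∑ i, g i (w i) := by
  obtain ⟨i₀, hi₀⟩ := Function.ne_iff.mp hne
  refine sum_lt_sum (fun i _ => ?_) ⟨i₀, mem_univ _, hg i₀ hi₀⟩
  rcases eq_or_ne (w i) (p i) with h | h
  · rw [h]
  · exact (hg i h).le

theorem quadratic_lt_of_nonneg_of_ne_max_zero_div {s c x : ℝ} (hs : 0 < s) (hx : 0 ≤ x)
    (hne : x ≠ max 0 (c / s)) :
    s * max 0 (c / s) ^ 2 - 2 * c * max 0 (c / s) < s * x ^ 2 - 2 * c * x := by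
  set p := max 0 (c / s)
  have hsq : 0 < s * (x - p) ^ 2 := mul_pos hs (pow_two_pos_of_ne_zero (sub_ne_zero.mpr hne))
  -- First-order optimality of the projection: `(x - p) (s p - c) ≥ 0` for every `x ≥ 0`.
  have hopt : 0 ≤ (x - p) * (s * p - c) := by
    rcases le_total (c / s) 0 with hc | hc
    · have hp : p = 0 := max_eq_left hc
      have hc' : c ≤ 0 := by simpa using (div_le_iff₀ hs).mp hc
      rw [hp]; nlinarith
    · have hp : p = c / s := max_eq_right hc
      rw [hp, mul_div_cancel₀ c hs.ne', sub_self, mul_zero]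
  nlinarith

theorem sum_sub_mul_sq {ι : Type*} [Fintype ι] (a h : ι → ℝ) (x : ℝ) :
    ∑ t, (a t - x * h t) ^ 2 =
      (∑ t, h t ^ 2) * x ^ 2 - 2 * (∑ t, a t * h t) * x + ∑ t, a t ^ 2 := by
  rw [sum_mul, mul_sum, sum_mul, ← sum_sub_distrib, ← sum_add_distrib]
  exact sum_congr rfl fun t _ => by ring

theorem sum_sub_mul_sq_lt_of_nonneg_of_ne {ι : Type*} [Fintype ι] {a h : ι → ℝ} {x : ℝ}
    (hh : 0 < ∑ t, h t ^ 2) (hx : 0 ≤ x)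
    (hne : x ≠ max 0 ((∑ t, a t * h t) / ∑ t, h t ^ 2)) :
    ∑ t, (a t - max 0 ((∑ t, a t * h t) / ∑ t, h t ^ 2) * h t) ^ 2 <
      ∑ t, (a t - x * h t) ^ 2 := by
  rw [sum_sub_mul_sq, sum_sub_mul_sq]
  linarith [quadratic_lt_of_nonneg_of_ne_max_zero_div hh hx hne]

/-- The HALS column update is the unique minimizer of the restricted
nonnegative least squares problem in that column. -/
theorem hals_column_update_unique_minimizer {m n r : ℕ}
    (M : Matrix (Fin m) (Fin n) ℝ) (H : Matrix (Fin r) (Fin n) ℝ)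
    (W : Matrix (Fin m) (Fin r) ℝ) (j : Fin r)
    (hH : 0 < ∑ t, (H j t)^2)
    (f : (Fin m → ℝ) → ℝ)
    (hf : ∀ w, f w = ∑ i, ∑ t,
      (M i t - w i * H j t - ∑ l ∈ Finset.univ.erase j, W i l * H l t)^2)
    (wstar : Fin m → ℝ)
    (hwstar : ∀ i, wstar i = max 0
      ((∑ t, (M i t - ∑ l ∈ Finset.univ.erase j, W i l * H l t) * H j t)
        / (∑ t, (H j t)^2))) :
    (∀ i, 0 ≤ wstar i) ∧
      ∀ w : Fin m → ℝ, (∀ i, 0 ≤ w i) → w ≠ wstar → f wstar < f w := by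
  set R : Fin m → Fin n → ℝ := fun i t => M i t - ∑ l ∈ univ.erase j, W i l * H l t
  have hf_sep : ∀ w, f w = ∑ i, ∑ t, (R i t - w i * H j t) ^ 2 := fun w => by
    rw [hf]
    exact sum_congr rfl fun i _ => sum_congr rfl fun t _ => by ring
  refine ⟨fun i => hwstar i ▸ le_max_left _ _, fun w hw hne => ?_⟩
  rw [hf_sep, hf_sep]
  refine sum_lt_sum_of_ne (fun i x => ∑ t, (R i t - x * H j t) ^ 2)
    (fun i hi => ?_) hne
  rw [hwstar i] at hi ⊢
  exact sum_sub_mul_sq_lt_of_nonneg_of_ne hH (hw i) hi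
end

section
/- Let M ∈ ℝ^{m×n} and H ∈ ℝ^{r×n} with ‖H_{j,:}‖ > 0 for all j, and define the HALS update of column j of W ≥ 0 by W_{:,j} ← max(0, (M H_{j,:}ᵀ − ∑_{l≠j} W_{:,l} H_{l,:} H_{j,:}ᵀ)/‖H_{j,:}‖²). Then each such column update does not increase the objective ‖M − W H‖_F²; that is, if W' agrees with W except in column j which is given by the update formula, then ‖M − W' H‖_F² ≤ ‖M − W H‖_F². -/
/-!
Fix a row `i` and write `W * H` as the column-`j` term plus the rest. The squared residual of
row `i` is then the convex quadratic `x ↦ ‖R - x • H_{j,:}‖²` in the single entry `x = W i j`,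
with `R` unaffected by the update; the update value `max 0 (⟪R, H_{j,:}⟫ / ‖H_{j,:}‖²)` is its
minimizer over `x ≥ 0`, so every row residual, hence the whole objective, does not increase.
-/

open Finset

lemma mul_sq_sub_two_mul_max_zero_div_le {a b x : ℝ} (ha : 0 < a) (hx : 0 ≤ x) :
    a * max 0 (b / a) ^ 2 - 2 * b * max 0 (b / a) ≤ a * x ^ 2 - 2 * b * x := by
  rcases le_or_gt b 0 with hb | hb
  · rw [max_eq_left (div_nonpos_of_nonpos_of_nonneg hb ha.le)]
    nlinarith [mul_nonneg ha.le (sq_nonneg x), mul_nonneg (neg_nonneg.2 hb) hx]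
  · rw [max_eq_right (div_pos hb ha).le]
    have hxq : a * x ^ 2 - 2 * b * x - (a * (b / a) ^ 2 - 2 * b * (b / a)) =
        a * (x - b / a) ^ 2 := by
      field_simp
      ring
    linarith [mul_nonneg ha.le (sq_nonneg (x - b / a))]

lemma sum_sq_sub_mul_eq {ι : Type*} [Fintype ι] (R h : ι → ℝ) (x : ℝ) :
    ∑ t, (R t - x * h t) ^ 2 =
      ∑ t, R t ^ 2 - 2 * (∑ t, R t * h t) * x + (∑ t, h t ^ 2) * x ^ 2 := by
  simp only [mul_sum, sum_mul, ← sum_sub_distrib, ← sum_add_distrib]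
  exact sum_congr rfl fun t _ => by ring

lemma sum_sq_sub_max_zero_div_mul_le {ι : Type*} [Fintype ι] (R h : ι → ℝ)
    (hh : 0 < ∑ t, h t ^ 2) {x : ℝ} (hx : 0 ≤ x) :
    ∑ t, (R t - max 0 ((∑ t, R t * h t) / ∑ t, h t ^ 2) * h t) ^ 2 ≤
      ∑ t, (R t - x * h t) ^ 2 := by
  rw [sum_sq_sub_mul_eq, sum_sq_sub_mul_eq]
  linarith [mul_sq_sub_two_mul_max_zero_div_le (b := ∑ t, R t * h t) hh hx]

lemma Matrix.mul_apply_eq_add_sum_erase {α l n R : Type*} [Fintype l] [DecidableEq l]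
    [NonUnitalNonAssocSemiring R] (A : Matrix α l R) (B : Matrix l n R) (i : α) (t : n) (j : l) :
    (A * B) i t = A i j * B j t + ∑ k ∈ univ.erase j, A i k * B k t :=
  (add_sum_erase _ (fun k => A i k * B k t) (mem_univ j)).symm

/-- A HALS column update does not increase the objective `‖M − W H‖_F²`. -/
theorem hals_column_update_decreases {m n r : ℕ}
    (M : Matrix (Fin m) (Fin n) ℝ) (H : Matrix (Fin r) (Fin n) ℝ)
    (W W' : Matrix (Fin m) (Fin r) ℝ) (j : Fin r)
    (hH : ∀ p : Fin r, 0 < ∑ t, (H p t)^2)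
    (hWnn : ∀ i l, 0 ≤ W i l)
    (hsame : ∀ i l, l ≠ j → W' i l = W i l)
    (hupd : ∀ i, W' i j = max 0
      ((∑ t, (M i t - ∑ l ∈ Finset.univ.erase j, W i l * H l t) * H j t)
        / (∑ t, (H j t)^2))) :
    (∑ i, ∑ t, (M i t - (W' * H) i t)^2) ≤ ∑ i, ∑ t, (M i t - (W * H) i t)^2 := by
  refine sum_le_sum fun i _ => ?_
  set R : Fin n → ℝ := fun t => M i t - ∑ l ∈ univ.erase j, W i l * H l t
  have residual_W : ∀ t, M i t - (W * H) i t = R t - W i j * H j t := fun t => by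
    rw [Matrix.mul_apply_eq_add_sum_erase _ _ _ _ j]
    ring
  have residual_W' : ∀ t, M i t - (W' * H) i t = R t - W' i j * H j t := fun t => by
    rw [Matrix.mul_apply_eq_add_sum_erase _ _ _ _ j,
      sum_congr rfl fun l hl => by rw [hsame i l (ne_of_mem_erase hl)]]
    ring
  simp only [residual_W, residual_W', hupd i]
  exact sum_sq_sub_max_zero_div_mul_le R (H j) (hH j) (hWnn i j)
end

section
/- Let T ∈ ℝ^{I₁×…×I_N} be an entrywise nonnegative tensor and r ≥ 1. The infimum of ‖T − ∑_{p=1}^r a_p^{(1)} ⊗ ⋯ ⊗ a_p^{(N)}‖_F² over entrywise nonnegative vectors a_p^{(i)} ∈ ℝ_+^{I_i} is attained; i.e., the nonnegative tensor factorization problem always admits an optimal solution. -/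
/-!
The objective is continuous, so it attains its minimum on any compact box of factors. A box
suffices because (for `N ≥ 1`) every competitor with value at most `f 0 = ∑ T²` can be
replaced by one in a fixed box without changing its tensor: its entries are bounded by
`2 √(∑ T²)`, hence so is each rank-one term `∏ᵢ aᵢ(jᵢ)`, and rescaling the factors of a
rank-one term so that they all have the same maximum (the `N`-th root of the maximum of the
product) keeps the term fixed.
-/

open Finset

theorem exists_isMinOn_of_forall_exists_mem_isCompact_le {X β : Type*} [TopologicalSpace X]
    [LinearOrder β] [TopologicalSpace β] [ClosedIicTopology β] {f : X → β} {s K : Set X}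
    (hK : IsCompact K) (hKs : K ⊆ s) (hKne : K.Nonempty) (hf : ContinuousOn f K)
    (hdom : ∀ a ∈ s, ∃ b ∈ K, f b ≤ f a) :
    ∃ a ∈ s, IsMinOn f s a := by
  obtain ⟨a, haK, hmin⟩ := hK.exists_isMinOn hKne hf
  refine ⟨a, hKs haK, fun a' ha' => ?_⟩
  obtain ⟨b, hbK, hba'⟩ := hdom a' ha'
  exact (hmin hbK).trans hba'

theorem abs_le_two_mul_sqrt_of_sum_sq_sub_le {J : Type*} [Fintype J] {T S : J → ℝ}
    (h : ∑ j, (T j - S j) ^ 2 ≤ ∑ j, T j ^ 2) (j : J) :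
    |S j| ≤ 2 * √(∑ j, T j ^ 2) := by
  have hT : |T j| ≤ √(∑ j, T j ^ 2) :=
    Real.abs_le_sqrt (single_le_sum (fun k _ => sq_nonneg (T k)) (mem_univ j))
  have hTS : |T j - S j| ≤ √(∑ j, T j ^ 2) :=
    Real.abs_le_sqrt <|
      (single_le_sum (fun k _ => sq_nonneg (T k - S k)) (mem_univ j)).trans h
  calc |S j| = |T j - (T j - S j)| := by rw [sub_sub_cancel]
    _ ≤ |T j| + |T j - S j| := abs_sub _ _
    _ ≤ 2 * √(∑ j, T j ^ 2) := by linarith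

section Factors

variable {ι : Type*} [Fintype ι] {κ : ι → Type*} [∀ i, Fintype (κ i)]

theorem exists_bounded_factors_prod_eq {v : ∀ i, κ i → ℝ} (hv : ∀ i x, 0 ≤ v i x) {c : ℝ}
    (hc : 0 ≤ c) (hvc : ∀ j : ∀ i, κ i, ∏ i, v i (j i) ≤ c) :
    ∃ w : ∀ i, κ i → ℝ, (∀ i x, w i x ∈ Set.Icc 0 (c ^ (Fintype.card ι : ℝ)⁻¹)) ∧
      ∀ j : ∀ i, κ i, ∏ i, w i (j i) = ∏ i, v i (j i) := by
  rcases isEmpty_or_nonempty ι with hι | hι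
  · exact ⟨v, isEmptyElim, fun _ => rfl⟩
  by_cases hzero : ∀ j : ∀ i, κ i, ∏ i, v i (j i) = 0
  · refine ⟨0, fun i x => ⟨le_rfl, by positivity⟩, fun j => ?_⟩
    simp [hzero j]
  push Not at hzero
  obtain ⟨j₀, hj₀⟩ := hzero
  choose xmax hxmax using fun i => @Finite.exists_max _ _ _ ⟨j₀ i⟩ _ (v i)
  set m : ι → ℝ := fun i => v i (xmax i)
  have hm_pos : ∀ i, 0 < m i := fun i =>
    lt_of_lt_of_le ((hv i (j₀ i)).lt_of_ne' (prod_ne_zero_iff.mp hj₀ i (mem_univ i)))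
      (hxmax i (j₀ i))
  have hn : Fintype.card ι ≠ 0 := Fintype.card_ne_zero
  have hM : 0 ≤ ∏ i, m i := prod_nonneg fun i _ => (hm_pos i).le
  set s := (∏ i, m i) ^ (Fintype.card ι : ℝ)⁻¹
  have hs : 0 ≤ s := Real.rpow_nonneg hM _
  refine ⟨fun i x => v i x * (s / m i),
    fun i x => ⟨mul_nonneg (hv i x) (div_nonneg hs (hm_pos i).le), ?_⟩, fun j => ?_⟩
  · calc v i x * (s / m i) ≤ m i * (s / m i) :=
          mul_le_mul_of_nonneg_right (hxmax i x) (div_nonneg hs (hm_pos i).le)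
      _ = s := by field_simp [(hm_pos i).ne']
      _ ≤ c ^ (Fintype.card ι : ℝ)⁻¹ := Real.rpow_le_rpow hM (hvc xmax) (by positivity)
  · rw [prod_mul_distrib, prod_div_distrib, prod_const, card_univ,
      Real.rpow_inv_natCast_pow hM hn,
      div_self (prod_pos fun i _ => hm_pos i).ne', mul_one]

variable {ρ : Type*} [Fintype ρ]

def cpTensor (a : ρ → ∀ i, κ i → ℝ) (j : ∀ i, κ i) : ℝ :=
  ∑ p, ∏ i, a p i (j i)

theorem exists_bounded_factors_cpTensor_eq {a : ρ → ∀ i, κ i → ℝ} (ha : ∀ p i x, 0 ≤ a p i x)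
    {c : ℝ} (hc : 0 ≤ c) (hac : ∀ j, cpTensor a j ≤ c) :
    ∃ b : ρ → ∀ i, κ i → ℝ, (∀ p i x, b p i x ∈ Set.Icc 0 (c ^ (Fintype.card ι : ℝ)⁻¹)) ∧
      cpTensor b = cpTensor a := by
  have hterm : ∀ p (j : ∀ i, κ i), ∏ i, a p i (j i) ≤ c := fun p j =>
    (single_le_sum (f := fun q => ∏ i, a q i (j i))
      (fun q _ => prod_nonneg fun i _ => ha q i _) (mem_univ p)).trans (hac j)
  choose b hbox hprod using fun p => exists_bounded_factors_prod_eq (ha p) hc (hterm p)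
  exact ⟨b, hbox, funext fun j => sum_congr rfl fun p _ => hprod p j⟩

end Factors

theorem ntf_optimum_attained_general {N r : ℕ} (I : Fin N → ℕ)
    (T : (∀ i : Fin N, Fin (I i)) → ℝ)
    (f : (Fin r → ∀ i : Fin N, Fin (I i) → ℝ) → ℝ)
    (hf : ∀ a, f a = ∑ j : (∀ i : Fin N, Fin (I i)),
      (T j - ∑ p : Fin r, ∏ i : Fin N, a p i (j i))^2) :
    ∃ a : Fin r → ∀ i : Fin N, Fin (I i) → ℝ,
      (∀ p i x, 0 ≤ a p i x) ∧
      ∀ a' : Fin r → ∀ i : Fin N, Fin (I i) → ℝ,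
        (∀ p i x, 0 ≤ a' p i x) → f a ≤ f a' := by
  obtain rfl | hN := N.eq_zero_or_pos
  · exact ⟨0, fun _ i => i.elim0, fun a' _ => (congrArg f (Subsingleton.elim _ _)).le⟩
  have hf_cont : Continuous f := by rw [funext hf]; fun_prop
  set c := 2 * √(∑ j, T j ^ 2)
  set K := Set.Icc (0 : Fin r → ∀ i : Fin N, Fin (I i) → ℝ) fun _ _ _ =>
    c ^ (Fintype.card (Fin N) : ℝ)⁻¹
  have h0K : 0 ∈ K := ⟨le_rfl, fun _ _ _ => by positivity⟩
  have hdom : ∀ a' ∈ Set.Ici 0, ∃ b ∈ K, f b ≤ f a' := by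
    intro a' ha'
    by_cases h0 : f 0 ≤ f a'
    · exact ⟨0, h0K, h0⟩
    have hbound : ∀ j, cpTensor a' j ≤ c := fun j =>
      (le_abs_self _).trans <| abs_le_two_mul_sqrt_of_sum_sq_sub_le
        (by simpa [hf, hN.ne', cpTensor] using (not_le.mp h0).le) j
    obtain ⟨b, hb, hba'⟩ :=
      exists_bounded_factors_cpTensor_eq (fun p i x => ha' p i x) (by positivity) hbound
    refine ⟨b, ⟨fun p i x => (hb p i x).1, fun p i x => (hb p i x).2⟩, ?_⟩
    simp only [hf]
    exact (congrArg (fun S => ∑ j, (T j - S j) ^ 2) hba').le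
  obtain ⟨a, ha, hmin⟩ := exists_isMinOn_of_forall_exists_mem_isCompact_le isCompact_Icc
    Set.Icc_subset_Ici_self ⟨0, h0K⟩ hf_cont.continuousOn hdom
  exact ⟨a, fun p i x => ha p i x, fun a' ha' => hmin (show 0 ≤ a' from fun p i x => ha' p i x)⟩

/-- The nonnegative tensor factorization problem always admits an optimal
solution: the infimum of `‖T − ∑_p ⊗_i a_p^{(i)}‖_F²` over entrywise
nonnegative factors is attained. -/
theorem ntf_optimum_attained {N r : ℕ} (I : Fin N → ℕ)
    (T : (∀ i : Fin N, Fin (I i)) → ℝ) (hT : ∀ j, 0 ≤ T j) (hr : 1 ≤ r)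
    (f : (Fin r → ∀ i : Fin N, Fin (I i) → ℝ) → ℝ)
    (hf : ∀ a, f a = ∑ j : (∀ i : Fin N, Fin (I i)),
      (T j - ∑ p : Fin r, ∏ i : Fin N, a p i (j i))^2) :
    ∃ a : Fin r → ∀ i : Fin N, Fin (I i) → ℝ,
      (∀ p i x, 0 ≤ a p i x) ∧
      ∀ a' : Fin r → ∀ i : Fin N, Fin (I i) → ℝ,
        (∀ p i x, 0 ≤ a' p i x) → f a ≤ f a' :=
  ntf_optimum_attained_general I T f hf
end
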